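/- Let k, ℓ > 0, let π1 ∈ T_k and π2 ∈ T_ℓ, let 1 ≤ i ≤ slmax(π2), and let a_i be the i-th left-to-right maximum of S(π2). Then S(C2(π1, π2, i)) = (S(π1))^{+(0,k,a_i)}·(S(π2))^{+(k−1,a_i+1,k)}·(k+ℓ+1). -/

import Mathlib

namespace TSP

theorem foldr_max_mem {α : Type} [LinearOrder α] (x : α) (l : List α) :
    l.foldr max x ∈ x :: l := by
  induction l with
  | nil => simp
  | cons a t ih =>
    simp only [List.foldr_cons]
    rcases max_choice a (t.foldr max x) with h | h <;> rw [h]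
    · simp
    · rcases List.mem_cons.mp ih with h' | h'
      · rw [h']; simp
      · exact List.mem_cons.mpr (Or.inr (List.mem_cons.mpr (Or.inr h')))

theorem length_takeWhile_lt {α : Type} [DecidableEq α] {m : α} {l : List α}
    (h : m ∈ l) : (l.takeWhile (· ≠ m)).length < l.length := by
  have hd : l.dropWhile (· ≠ m) ≠ [] := by
    intro hnil
    have := List.dropWhile_eq_nil_iff.mp hnil m h
    simp at this
  have hsum : (l.takeWhile (· ≠ m)).length + (l.dropWhile (· ≠ m)).length = l.length := by
    rw [← List.length_append, List.takeWhile_append_dropWhile]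
  have : 0 < (l.dropWhile (· ≠ m)).length := List.length_pos_iff.mpr hd
  omega

theorem length_tail_dropWhile_lt {α : Type} [DecidableEq α] {m : α} {l : List α}
    (h : l ≠ []) : ((l.dropWhile (· ≠ m)).tail).length < l.length := by
  have hsum : (l.takeWhile (· ≠ m)).length + (l.dropWhile (· ≠ m)).length = l.length := by
    rw [← List.length_append, List.takeWhile_append_dropWhile]
  have h2 : ((l.dropWhile (· ≠ m)).tail).length = (l.dropWhile (· ≠ m)).length - 1 :=
    List.length_tail
  have : 0 < l.length := List.length_pos_iff.mpr h
  omega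

/-- The stack-sorting operator `S`: `S(ε) = ε`, and if `A` is nonempty with
largest element `m` and `A = A_L · (m) · A_R`, then `S(A) = S(A_L) · S(A_R) · (m)`. -/
def S {α : Type} [LinearOrder α] : List α → List α
  | [] => []
  | x :: l =>
    let m := l.foldr max x
    S ((x :: l).takeWhile (· ≠ m)) ++ S (((x :: l).dropWhile (· ≠ m)).tail) ++ [m]
termination_by l => l.length
decreasing_by
  · have h := foldr_max_mem x l
    rw [← List.foldr_attach (f := max)] at h
    exact length_takeWhile_lt h
  · exact length_tail_dropWhile_lt (by simp)

/-- The identity permutation `id_n = (1, 2, …, n)` as a list. -/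
def idPerm (n : ℕ) : List ℕ := List.range' 1 n

/-- `l` is a permutation of `{1, …, n}` (viewed as a sequence). -/
def IsPermOf (n : ℕ) (l : List ℕ) : Prop := l.Perm (idPerm n)

/-- `l` is a two-stack sortable permutation (of `{1, …, len l}`). -/
def Is2SS (l : List ℕ) : Prop := IsPermOf l.length l ∧ S (S l) = idPerm l.length

/-- `σ^{+k}`: add `k` to every entry. -/
def shift (k : ℕ) (l : List ℕ) : List ℕ := l.map (· + k)

/-- `σ^{+(k1,m,k2)}`: add `k1` to every entry strictly smaller than `m`, `k2` to the others. -/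
def shift3 (k1 m k2 : ℕ) (l : List ℕ) : List ℕ :=
  l.map (fun a => if a < m then a + k1 else a + k2)

/-- Standardization `P(A)`: the permutation of `{1,…,len A}` in the same relative order. -/
def stand (l : List ℕ) : List ℕ := l.map (fun a => (l.filter (fun b => b ≤ a)).length)

/-- Avoidance of the pattern 231: no positions `i < j < k` with `l(k) < l(i) < l(j)`. -/
def Avoids231 (l : List ℕ) : Prop :=
  ¬ ∃ i j k, i < j ∧ j < k ∧ k < l.length ∧
      l.getD k 0 < l.getD i 0 ∧ l.getD i 0 < l.getD j 0

/-- The list of values of the left-to-right maxima of `l`, in order. -/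
def lrMaxima (l : List ℕ) : List ℕ :=
  ((List.range l.length).filter
    (fun i => (l.take i).all (fun b => b < l.getD i 0))).map (fun i => l.getD i 0)

/-- `lmax`: the number of left-to-right maxima. -/
def lmax (l : List ℕ) : ℕ :=
  (List.range l.length).countP (fun i => (l.take i).all (fun b => b < l.getD i 0))

/-- `rmax`: the number of right-to-left maxima. -/
def rmax (l : List ℕ) : ℕ :=
  (List.range l.length).countP (fun i => (l.drop (i+1)).all (fun b => b < l.getD i 0))

/-- `asc`: the number of ascents. -/
def asc (l : List ℕ) : ℕ :=
  (List.range (l.length - 1)).countP (fun i => l.getD i 0 < l.getD (i+1) 0)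

/-- `des`: the number of descents. -/
def des (l : List ℕ) : ℕ :=
  (List.range (l.length - 1)).countP (fun i => l.getD (i+1) 0 < l.getD i 0)

/-- `slmax(π)`: the number of left-to-right maxima of `S(π)`. -/
def slmax (l : List ℕ) : ℕ := lmax (S l)

/-- `sldes(π)`: the number of entries `a` that precede `a - 1` in `S(π)`. -/
def sldes (l : List ℕ) : ℕ :=
  (List.range (S l).length).countP
    (fun i => ((S l).drop (i+1)).any (fun b => b + 1 = (S l).getD i 0))

/-- The construction `C1(π1, π2) = π1 · (k+ℓ+1) · π2^{+k}`. -/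
def C1 (p1 p2 : List ℕ) : List ℕ :=
  p1 ++ (p1.length + p2.length + 1) :: shift p1.length p2

/-- The `i`-th left-to-right maximum `a_i` of `S(π2)` (1-indexed). -/
def lrm (p2 : List ℕ) (i : ℕ) : ℕ := (lrMaxima (S p2)).getD (i - 1) 0

/-- The construction `C2(π1, π2, i) = π1^{+(0,k,a_i)} · (k+ℓ+1) · π2^{+(k-1,a_i+1,k)}`. -/
def C2 (p1 p2 : List ℕ) (i : ℕ) : List ℕ :=
  shift3 0 p1.length (lrm p2 i) p1 ++
    (p1.length + p2.length + 1) :: shift3 (p1.length - 1) (lrm p2 i + 1) p1.length p2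

/-- The decomposition `D(π) = (P(π_ℓ), P(π_r))`, where `π = π_ℓ · (n) · π_r`
with `n` the largest entry of `π`. -/
def D (l : List ℕ) : List ℕ × List ℕ :=
  match l with
  | [] => ([], [])
  | x :: t =>
    let m := t.foldr max x
    (stand ((x :: t).takeWhile (· ≠ m)), stand (((x :: t).dropWhile (· ≠ m)).tail))


/-!
The entry `k + ℓ + 1` is the largest of `C2(π1, π2, i)`, so one step of the recursion of `S`
splits there. Both relabelings `σ ↦ σ^{+(k1,m,k2)}` with `k1 ≤ k2` are strictly increasing, and
`S` commutes with strictly increasing relabelings because it only compares entries. The bound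
`a_i ≤ ℓ` keeps every relabeled entry below `k + ℓ + 1`.
-/

section StackSort

variable {α β : Type} [LinearOrder α] [LinearOrder β]

theorem foldr_max_le_iff {x b : α} {l : List α} : l.foldr max x ≤ b ↔ ∀ z ∈ x :: l, z ≤ b := by
  induction l with
  | nil => simp
  | cons a l ih =>
    simp only [List.foldr_cons, max_le_iff, ih, List.forall_mem_cons]
    tauto

theorem foldr_max_eq_of_mem {x m : α} {l : List α} (hle : ∀ z ∈ x :: l, z ≤ m)
    (hm : m ∈ x :: l) : l.foldr max x = m :=
  le_antisymm (foldr_max_le_iff.2 hle) (foldr_max_le_iff.1 le_rfl m hm)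

theorem S_append_cons_max {A B : List α} {m : α} (hA : ∀ x ∈ A, x < m) (hB : ∀ x ∈ B, x ≤ m) :
    S (A ++ m :: B) = S A ++ S B ++ [m] := by
  obtain ⟨y, t, hyt⟩ : ∃ y t, A ++ m :: B = y :: t := List.exists_cons_of_ne_nil (by simp)
  have hmax : t.foldr max y = m := by
    refine foldr_max_eq_of_mem (fun z hz => ?_) (by simp [← hyt])
    rw [← hyt, List.mem_append, List.mem_cons] at hz
    rcases hz with hz | rfl | hz
    exacts [(hA z hz).le, le_rfl, hB z hz]
  have hA' : ∀ x ∈ A, decide (x ≠ m) = true := fun x hx => by simpa using (hA x hx).ne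
  rw [hyt, S.eq_2, hmax, ← hyt, List.takeWhile_append_of_pos hA',
    List.dropWhile_append_of_pos hA']
  simp

theorem exists_eq_append_cons_max : ∀ {l : List α}, l ≠ [] →
    ∃ A m B, l = A ++ m :: B ∧ (∀ x ∈ A, x < m) ∧ ∀ x ∈ B, x ≤ m
  | [x], _ => ⟨[], x, [], by simp⟩
  | x :: y :: t, _ => by
    obtain ⟨A, m, B, heq, hA, hB⟩ := exists_eq_append_cons_max (l := y :: t) (by simp)
    rcases lt_or_ge x m with hxm | hmx
    · refine ⟨x :: A, m, B, by simp [heq], ?_, hB⟩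
      simpa [hxm] using hA
    · refine ⟨[], x, y :: t, rfl, by simp, ?_⟩
      rw [heq]
      intro z hz
      rw [List.mem_append, List.mem_cons] at hz
      rcases hz with hz | rfl | hz
      exacts [(hA z hz).le.trans hmx, hmx, (hB z hz).trans hmx]

-- Mirrors the recursion of `S`, which splits a list at its first maximal entry.
theorem induction_on_max_split {motive : List α → Prop} (nil : motive [])
    (append_cons : ∀ A m B, (∀ x ∈ A, x < m) → (∀ x ∈ B, x ≤ m) →
      motive A → motive B → motive (A ++ m :: B))
    (l : List α) : motive l := by
  induction hn : l.length using Nat.strong_induction_on generalizing l with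
  | _ n ih =>
    rcases eq_or_ne l [] with rfl | hl
    · exact nil
    obtain ⟨A, m, B, rfl, hA, hB⟩ := exists_eq_append_cons_max hl
    have hlen : (A ++ m :: B).length = A.length + B.length + 1 := by
      simp only [List.length_append, List.length_cons]; omega
    exact append_cons A m B hA hB (ih _ (by omega) _ rfl) (ih _ (by omega) _ rfl)

theorem S_perm (l : List α) : (S l).Perm l := by
  induction l using induction_on_max_split with
  | nil => simp [S]
  | append_cons A m B hA hB ihA ihB =>
    rw [S_append_cons_max hA hB, List.append_assoc]
    exact ihA.append ((ihB.append_right [m]).trans (List.perm_append_singleton m B))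

theorem S_map {f : α → β} (hf : StrictMono f) (l : List α) : S (l.map f) = (S l).map f := by
  induction l using induction_on_max_split with
  | nil => simp [S]
  | append_cons A m B hA hB ihA ihB =>
    have hfA : ∀ y ∈ A.map f, y < f m := by simpa using fun x hx => hf (hA x hx)
    have hfB : ∀ y ∈ B.map f, y ≤ f m := by simpa using fun x hx => hf.monotone (hB x hx)
    rw [List.map_append, List.map_cons, S_append_cons_max hfA hfB, S_append_cons_max hA hB,
      ihA, ihB]
    simp

end StackSort

theorem S_shift3 {k1 k2 : ℕ} (m : ℕ) (h : k1 ≤ k2) (l : List ℕ) :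
    S (shift3 k1 m k2 l) = shift3 k1 m k2 (S l) :=
  S_map (fun x y hxy => by split_ifs <;> omega) l

theorem IsPermOf.le_of_mem {n : ℕ} {l : List ℕ} (hp : IsPermOf n l) {x : ℕ} (hx : x ∈ l) :
    x ≤ n := by
  have := List.mem_range'_1.mp (hp.mem_iff.mp hx)
  omega

theorem mem_of_mem_lrMaxima {l : List ℕ} {a : ℕ} (h : a ∈ lrMaxima l) : a ∈ l := by
  obtain ⟨j, hj, rfl⟩ := List.mem_map.mp h
  have hjl : j < l.length := List.mem_range.mp (List.mem_filter.mp hj).1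
  rw [List.getD_eq_getElem l 0 hjl]
  exact List.getElem_mem hjl

theorem lrm_le {n : ℕ} {p : List ℕ} (hp : IsPermOf n p) (i : ℕ) : lrm p i ≤ n := by
  -- `lrm` is an entry of `S p` or the default value `0`
  rw [lrm, List.getD_eq_getElem?_getD]
  rcases h : (lrMaxima (S p))[i - 1]? with _ | a
  · simp
  · exact hp.le_of_mem ((S_perm p).subset (mem_of_mem_lrMaxima (List.mem_of_getElem? h)))

theorem S_C2_general (k ℓ : ℕ) (π1 π2 : List ℕ)
    (h1 : π1.length = k) (h1' : Is2SS π1) (h2 : π2.length = ℓ) (h2' : Is2SS π2)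
    (i : ℕ) (a : ℕ) (ha : a = lrm π2 i) :
    S (C2 π1 π2 i) =
      shift3 0 k a (S π1) ++ shift3 (k - 1) (a + 1) k (S π2) ++ [k + ℓ + 1] := by
  have haℓ : a ≤ ℓ := ha ▸ h2 ▸ lrm_le h2'.1 i
  have hπ1 : ∀ x ∈ π1, x ≤ k := fun x hx => h1 ▸ h1'.1.le_of_mem hx
  have hπ2 : ∀ x ∈ π2, x ≤ ℓ := fun x hx => h2 ▸ h2'.1.le_of_mem hx
  have hC2 : C2 π1 π2 i = shift3 0 k a π1 ++ (k + ℓ + 1) :: shift3 (k - 1) (a + 1) k π2 := by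
    subst h1 h2 ha; rfl
  rw [hC2, S_append_cons_max, S_shift3 _ (Nat.zero_le a), S_shift3 _ (Nat.sub_le k 1)]
  · simp only [shift3, List.mem_map]
    rintro _ ⟨x, hx, rfl⟩
    have := hπ1 x hx
    split_ifs <;> omega
  · simp only [shift3, List.mem_map]
    rintro _ ⟨x, hx, rfl⟩
    have := hπ2 x hx
    split_ifs <;> omega

/-- For `k, ℓ > 0`, `π1 ∈ T_k`, `π2 ∈ T_ℓ`, `1 ≤ i ≤ slmax(π2)` and `a_i`
the `i`-th left-to-right maximum of `S(π2)`,
`S(C2(π1, π2, i)) = (S(π1))^{+(0,k,a_i)} · (S(π2))^{+(k−1,a_i+1,k)} · (k+ℓ+1)`. -/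
theorem S_C2 (k ℓ : ℕ) (hk : 0 < k) (hℓ : 0 < ℓ) (π1 π2 : List ℕ)
    (h1 : π1.length = k) (h1' : Is2SS π1) (h2 : π2.length = ℓ) (h2' : Is2SS π2)
    (i : ℕ) (hi1 : 1 ≤ i) (hi2 : i ≤ slmax π2) (a : ℕ) (ha : a = lrm π2 i) :
    S (C2 π1 π2 i) =
      shift3 0 k a (S π1) ++ shift3 (k - 1) (a + 1) k (S π2) ++ [k + ℓ + 1] :=
  S_C2_general k ℓ π1 π2 h1 h1' h2 h2' i a ha

end TSP
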